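/- For any prime p > 3, the sum ∑_{n=0}^{p-1} n * 864^(p-1-n) * ∑_{k=0}^n C(6k,3k) * C(3k,k) * C(6(n-k), 3(n-k)) * C(3(n-k), n-k) is divisible by p^2. -/

import Mathlib

/-!
Write `a k = C(6k, 3k) C(3k, k)` and `g m = a m * C(2m, m)`. The inner sum is the convolution
square `c n = ∑ₖ a k a (n - k)`, and the key identity is `c n = ∑ⱼ g (n - j) C(n - j, j) (-432)ʲ`,
i.e. `(∑ a k xᵏ)² = ∑ g m (x - 432 x²)ᵐ`. Both sides satisfy the same second-order recurrence and
agree for `n = 0, 1`.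

Substituting and collecting by `m`, the sum becomes
`∑_{m<p} g m ∑ⱼ (m + j) 864^(p-1-m-j) C(m, j) (-432)ʲ`. For `2m < p` the inner sum is a multiple
of `∑ⱼ (m + j) C(m, j) (-432)ʲ 864^(m-j) = m 432^(m-1) (2 (-432) + 864) = 0`, and for
`p ≤ 2m < 2p` Lucas' theorem gives `p ∣ a m` and `p ∣ C(2m, m)`, hence `p² ∣ g m`.
-/

open Finset Nat

theorem Finset.sum_range_sum_antidiagonal {M : Type*} [AddCommMonoid M] (N : ℕ) (f : ℕ × ℕ → M) :
    ∑ n ∈ range N, ∑ q ∈ antidiagonal n, f q = ∑ m ∈ range N, ∑ j ∈ range (N - m), f (m, j) := by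
  simp_rw [Nat.sum_antidiagonal_eq_sum_range_succ_mk]
  rw [sum_comm' (t' := range N) (s' := fun m => Ico m N) (h := fun n m => by
    simp only [mem_range, mem_Ico]; omega)]
  refine sum_congr rfl fun m _ => ?_
  rw [sum_Ico_eq_sum_range]
  simp

theorem Finset.sum_range_mul_choose_mul_pow {R : Type*} [CommRing R] (x y : R) (m : ℕ) :
    ∑ j ∈ range (m + 1), (j : R) * m.choose j * x ^ j * y ^ (m - j)
      = m * x * (x + y) ^ (m - 1) := by
  cases m with
  | zero => simp
  | succ s =>
    rw [sum_range_succ', Nat.add_sub_cancel, add_pow, mul_sum]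
    simp only [Nat.cast_zero, zero_mul, add_zero]
    refine sum_congr rfl fun j _ => ?_
    have hc := congrArg (Nat.cast : ℕ → R) (add_one_mul_choose_eq s j)
    rw [show s + 1 - (j + 1) = s - j by omega]
    push_cast at hc ⊢
    linear_combination (-(x ^ (j + 1) * y ^ (s - j))) * hc

theorem Finset.sum_range_add_mul_choose_mul_pow_eq_zero {R : Type*} [CommRing R] {x y : R}
    (h : 2 * x + y = 0) (m : ℕ) :
    ∑ j ∈ range (m + 1), ((m : R) + j) * m.choose j * x ^ j * y ^ (m - j) = 0 := by
  calc ∑ j ∈ range (m + 1), ((m : R) + j) * m.choose j * x ^ j * y ^ (m - j)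
      = m * ∑ j ∈ range (m + 1), x ^ j * y ^ (m - j) * m.choose j
        + ∑ j ∈ range (m + 1), (j : R) * m.choose j * x ^ j * y ^ (m - j) := by
        rw [mul_sum, ← sum_add_distrib]
        exact sum_congr rfl fun j _ => by ring
    _ = m * (x + y) ^ m + m * x * (x + y) ^ (m - 1) := by
        rw [← add_pow, sum_range_mul_choose_mul_pow]
    _ = 0 := by
        cases m with
        | zero => simp
        | succ s =>
          push_cast
          linear_combination ((s + 1) * (x + y) ^ s) * h

theorem Finset.sum_range_sub_add_mul_pow_mul_choose_mul_pow_eq_zero {R : Type*} [CommRing R]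
    {x y : R} (h : 2 * x + y = 0) {m N : ℕ} (hm : 2 * m < N) :
    ∑ j ∈ range (N - m), ((m : R) + j) * y ^ (N - 1 - (m + j)) * m.choose j * x ^ j = 0 := by
  rw [← sum_subset (range_subset_range.2 (show m + 1 ≤ N - m by omega)) fun j _ hj => by
    simp [Nat.choose_eq_zero_of_lt (show m < j by simp only [mem_range] at hj; omega)]]
  calc ∑ j ∈ range (m + 1), ((m : R) + j) * y ^ (N - 1 - (m + j)) * m.choose j * x ^ j
      = y ^ (N - 1 - 2 * m)
          * ∑ j ∈ range (m + 1), ((m : R) + j) * m.choose j * x ^ j * y ^ (m - j) := by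
        rw [mul_sum]
        refine sum_congr rfl fun j hj => ?_
        rw [show N - 1 - (m + j) = N - 1 - 2 * m + (m - j) by simp only [mem_range] at hj; omega,
          pow_add]
        ring
    _ = 0 := by rw [sum_range_add_mul_choose_mul_pow_eq_zero h, mul_zero]

theorem Nat.Prime.dvd_choose_of_mod_lt {p n k : ℕ} (hp : p.Prime) (h : n % p < k % p) :
    p ∣ n.choose k := by
  have := Fact.mk hp
  have hl := Choose.choose_modEq_choose_mod_mul_choose_div_nat (p := p) (n := n) (k := k)
  rwa [Nat.choose_eq_zero_of_lt h, zero_mul, Nat.modEq_zero_iff_dvd] at hl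

section CastChoose

variable {K : Type*} [Field K] [CharZero K]

theorem Nat.cast_choose_succ_left {n k : ℕ} (h : k ≤ n) :
    ((n + 1).choose k : K) = (n + 1) * n.choose k / (n + 1 - k) := by
  have h₀ : ((n + 1 - k : ℕ) : K) ≠ 0 := Nat.cast_ne_zero.2 (by omega)
  have h₁ := congrArg (Nat.cast : ℕ → K) (choose_mul_succ_eq n k)
  push_cast [Nat.cast_sub (show k ≤ n + 1 by omega)] at h₀ h₁
  rw [eq_div_iff h₀]
  linear_combination -h₁

theorem Nat.cast_choose_succ_right {n k : ℕ} (h : k ≤ n) :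
    (n.choose (k + 1) : K) = (n - k) * n.choose k / (k + 1) := by
  have h₁ := congrArg (Nat.cast : ℕ → K) (choose_succ_right_eq n k)
  push_cast [Nat.cast_sub h] at h₁
  rw [eq_div_iff (by exact_mod_cast k.succ_ne_zero)]
  linear_combination h₁

end CastChoose

namespace Sextic

def a (k : ℕ) : ℕ := (6 * k).choose (3 * k) * (3 * k).choose k

def g (m : ℕ) : ℕ := a m * m.centralBinom

theorem a_mul_factorial (k : ℕ) : a k * ((3 * k)! * (2 * k)! * k !) = (6 * k)! := by
  have h₁ := Nat.choose_mul_factorial_mul_factorial (show 3 * k ≤ 6 * k by omega)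
  have h₂ := Nat.choose_mul_factorial_mul_factorial (show k ≤ 3 * k by omega)
  rw [show 6 * k - 3 * k = 3 * k by omega] at h₁
  rw [show 3 * k - k = 2 * k by omega] at h₂
  rw [← h₁, ← h₂, a]
  ring

theorem a_succ (k : ℕ) : (k + 1) ^ 2 * a (k + 1) = 12 * (6 * k + 1) * (6 * k + 5) * a k := by
  apply Nat.eq_of_mul_eq_mul_right (by positivity : 0 < (3 * k + 3)! * (2 * k + 2)! * (k + 1)!)
  calc (k + 1) ^ 2 * a (k + 1) * ((3 * k + 3)! * (2 * k + 2)! * (k + 1)!)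
      = (k + 1) ^ 2 * (6 * (k + 1))! := by rw [mul_assoc, ← a_mul_factorial]; ring_nf
    _ = _ := by
      rw [show 6 * (k + 1) = 6 * k + 1 + 1 + 1 + 1 + 1 + 1 by ring]
      simp only [Nat.factorial_succ]
      rw [← a_mul_factorial k]
      ring

theorem g_succ (m : ℕ) :
    (m + 1) ^ 3 * g (m + 1) = 24 * (6 * m + 1) * (6 * m + 5) * (2 * m + 1) * g m := by
  calc (m + 1) ^ 3 * g (m + 1) = (m + 1) ^ 2 * a (m + 1) * ((m + 1) * (m + 1).centralBinom) := by
        rw [g]; ring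
    _ = _ := by rw [a_succ, succ_mul_centralBinom_succ, g]; ring

section Cast

variable {R : Type*} [CommRing R]

theorem cast_a_succ (k : ℕ) :
    ((k : R) + 1) ^ 2 * a (k + 1) = 12 * (6 * k + 1) * (6 * k + 5) * a k := by
  simpa using congrArg (Nat.cast : ℕ → R) (a_succ k)

theorem cast_g_succ (m : ℕ) :
    ((m : R) + 1) ^ 3 * g (m + 1) = 24 * (6 * m + 1) * (6 * m + 5) * (2 * m + 1) * g m := by
  simpa using congrArg (Nat.cast : ℕ → R) (g_succ m)

end Cast

section Recurrence

variable {R : Type*} [CommRing R]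

/- The recurrence shared by `conv` and `clausen`. It and the certificates `convCert` and
`clausenCert` below were found with Zeilberger's algorithm. -/
def recOp (u : ℕ → R) (n : ℕ) : R :=
  ((n : R) + 2) ^ 3 * u (n + 2) - 24 * (2 * n + 3) * (18 * n ^ 2 + 54 * n + 41) * u (n + 1)
    + 20736 * (n + 1) * (3 * n + 1) * (3 * n + 5) * u n

theorem recOp_sum {ι : Type*} (s : Finset ι) (f : ι → ℕ → R) (n : ℕ) :
    recOp (fun n' => ∑ i ∈ s, f i n') n = ∑ i ∈ s, recOp (f i) n := by
  simp only [recOp, mul_sum, ← sum_sub_distrib, ← sum_add_distrib]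

theorem eq_of_recOp_eq_zero [IsDomain R] [CharZero R] {u v : ℕ → R}
    (hu : ∀ n, recOp u n = 0) (hv : ∀ n, recOp v n = 0) (h₀ : u 0 = v 0) (h₁ : u 1 = v 1) :
    u = v := by
  suffices ∀ n, u n = v n ∧ u (n + 1) = v (n + 1) from funext fun n => (this n).1
  intro n
  induction n with
  | zero => exact ⟨h₀, h₁⟩
  | succ n ih =>
    refine ⟨ih.2, mul_left_cancel₀ (pow_ne_zero 3 (?_ : (n : R) + 2 ≠ 0)) ?_⟩
    · exact_mod_cast (n + 1).succ_ne_zero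
    · have h := (hu n).trans (hv n).symm
      simp only [recOp, ih.1, ih.2] at h
      linear_combination h

end Recurrence

def conv (n : ℕ) : ℤ := ∑ k ∈ range (n + 1), (a k : ℤ) * a (n - k)

theorem conv_eq_sum_choose (n : ℕ) :
    conv n = ∑ k ∈ range (n + 1), ((6 * k).choose (3 * k) : ℤ) * (3 * k).choose k *
      (6 * (n - k)).choose (3 * (n - k)) * (3 * (n - k)).choose (n - k) := by
  push_cast [conv, a]
  exact sum_congr rfl fun k _ => by ring

def convCert (n k : ℕ) : ℤ :=
  a k * (k : ℤ) ^ 2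
    * (432 * (3 * n - 2 * k + 4) * a (n + 1 - k) - (3 * n - 2 * k + 6) * a (n + 2 - k))

theorem recOp_conv_summand (n k : ℕ) (hk : k ≤ n) :
    recOp (fun n' => (a k : ℤ) * a (n' - k)) n = convCert n (k + 1) - convCert n k := by
  obtain ⟨m, rfl⟩ : ∃ m, n = m + k := ⟨n - k, by omega⟩
  simp only [recOp, convCert]
  rw [show m + k + 2 - k = m + 2 by omega, show m + k + 1 - k = m + 1 by omega,
    show m + k - k = m by omega, show m + k + 1 - (k + 1) = m by omega,
    show m + k + 2 - (k + 1) = m + 1 by omega]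
  have ha₀ := cast_a_succ (R := ℤ) k
  have ha₁ := cast_a_succ (R := ℤ) m
  have ha₂ := cast_a_succ (R := ℤ) (m + 1)
  push_cast at ha₂ ⊢
  linear_combination ((3 * (m : ℤ) + k + 4) * a (m + 1) - 432 * (3 * m + k + 2) * a m) * ha₀
    - 432 * (m + 3 * k + 2) * a k * ha₁ + (m + 3 * k + 2) * a k * ha₂

theorem conv_recOp (n : ℕ) : recOp conv n = 0 := by
  have h₀ : a 0 = 1 := by decide
  have h₁ : a 1 = 60 := by decide
  have hconv₂ : conv (n + 2) = ∑ k ∈ range (n + 1), (a k : ℤ) * a (n + 2 - k)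
      + 60 * a (n + 1) + a (n + 2) := by
    rw [conv, sum_range_succ, sum_range_succ, show n + 2 - (n + 1) = 1 by omega, Nat.sub_self,
      h₀, h₁]
    push_cast
    ring
  have hconv₁ : conv (n + 1) = ∑ k ∈ range (n + 1), (a k : ℤ) * a (n + 1 - k) + a (n + 1) := by
    simp [conv, sum_range_succ, h₀]
  have htel : recOp (fun n' => ∑ k ∈ range (n + 1), (a k : ℤ) * a (n' - k)) n
      = convCert n (n + 1) := by
    rw [recOp_sum, sum_congr rfl fun k hk => recOp_conv_summand n k (by simp only [mem_range] at hk; omega),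
      sum_range_sub]
    simp [convCert]
  simp only [convCert, recOp, show n + 1 - (n + 1) = 0 by omega,
    show n + 2 - (n + 1) = 1 by omega, h₀, h₁] at htel
  have hR := cast_a_succ (R := ℤ) (n + 1)
  simp only [recOp, hconv₂, hconv₁]
  rw [conv]
  push_cast at htel hR ⊢
  linear_combination htel + ((n : ℤ) + 2) * hR

def clausenTerm (n j : ℕ) : ℤ := g (n - j) * (n - j).choose j * (-432) ^ j

def clausen (n : ℕ) : ℤ := ∑ j ∈ range (n + 1), clausenTerm n j

def clausenCert (n j : ℕ) : ℤ :=
  (-432) ^ j * ((-480 - 1488 * (j : ℤ) - 2592 * j ^ 2 + 1728 * j ^ 3 - 9072 * n * j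
      + 2592 * n * j ^ 2 - 3888 * n ^ 2 * j) * g (n + 1 - j) * (n + 1 - j).choose j
    + (480 - 4416 * (j : ℤ) + 10368 * j ^ 2 - 6912 * j ^ 3) * g (n + 1 - j) * (n + 2 - j).choose j
    + (2 * (j : ℤ) ^ 3 - 6 * j ^ 2 - 3 * n * j ^ 2) * g (n + 2 - j) * (n + 2 - j).choose j)

theorem clausenTerm_eq_zero {n j : ℕ} (h : n < 2 * j) : clausenTerm n j = 0 := by
  simp [clausenTerm, Nat.choose_eq_zero_of_lt (show n - j < j by omega)]

theorem clausen_eq_sum_range {n K : ℕ} (h : n < K) :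
    clausen n = ∑ j ∈ range K, clausenTerm n j :=
  sum_subset (range_subset_range.2 (by omega)) fun j _ hj =>
    clausenTerm_eq_zero (by simp only [mem_range] at hj; omega)

theorem clausenCert_zero (n : ℕ) : clausenCert n 0 = 0 := by
  simp [clausenCert]

theorem clausenCert_eq_zero {n j : ℕ} (h : n + 2 < 2 * j) : clausenCert n j = 0 := by
  simp [clausenCert, Nat.choose_eq_zero_of_lt (show n + 1 - j < j by omega),
    Nat.choose_eq_zero_of_lt (show n + 2 - j < j by omega)]

theorem recOp_clausenTerm_of_le {s j : ℕ} (hj : j ≤ s) :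
    recOp (fun n => clausenTerm n j) (s + j)
      = clausenCert (s + j) (j + 1) - clausenCert (s + j) j := by
  simp only [recOp, clausenTerm, clausenCert]
  rw [show s + j + 2 - j = s + 2 by omega, show s + j + 1 - j = s + 1 by omega,
    show s + j - j = s by omega, show s + j + 1 - (j + 1) = s by omega,
    show s + j + 2 - (j + 1) = s + 1 by omega]
  apply Int.cast_injective (α := ℚ)
  push_cast
  have hg₁ : (g (s + 1) : ℚ)
      = 24 * (6 * s + 1) * (6 * s + 5) * (2 * s + 1) * g s / ((s : ℚ) + 1) ^ 3 := by
    rw [eq_div_iff (by positivity), mul_comm]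
    exact cast_g_succ s
  have hg₂ : (g (s + 2) : ℚ)
      = 24 * (6 * s + 7) * (6 * s + 11) * (2 * s + 3) * g (s + 1) / ((s : ℚ) + 2) ^ 3 := by
    rw [eq_div_iff (by positivity), mul_comm]
    have := cast_g_succ (R := ℚ) (s + 1)
    push_cast at this
    linear_combination this
  -- Express every `g` and binomial coefficient through `g s` and `s.choose j`.
  have hc₁ := Nat.cast_choose_succ_left (K := ℚ) hj
  have hc₂ := Nat.cast_choose_succ_left (K := ℚ) (show j ≤ s + 1 by omega)
  have hc₃ := Nat.cast_choose_succ_right (K := ℚ) hj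
  have hc₄ := Nat.cast_choose_succ_right (K := ℚ) (show j ≤ s + 1 by omega)
  push_cast at hc₂ hc₄
  have hjs : (j : ℚ) ≤ s := by exact_mod_cast hj
  have d₁ : (s : ℚ) + 1 - j ≠ 0 := by linarith
  have d₂ : (s : ℚ) + 1 + 1 - j ≠ 0 := by linarith
  rw [pow_succ, hg₂, hc₂, hc₄, hc₃, hg₁, hc₁]
  field_simp
  ring

theorem recOp_clausenTerm_even (t : ℕ) :
    recOp (fun n => clausenTerm n (t + 1)) (2 * t)
      = clausenCert (2 * t) (t + 2) - clausenCert (2 * t) (t + 1) := by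
  simp only [recOp]
  rw [clausenTerm_eq_zero (show 2 * t + 1 < 2 * (t + 1) by omega),
    clausenTerm_eq_zero (show 2 * t < 2 * (t + 1) by omega),
    clausenCert_eq_zero (show 2 * t + 2 < 2 * (t + 2) by omega), clausenTerm, clausenCert,
    show 2 * t + 2 - (t + 1) = t + 1 by omega, show 2 * t + 1 - (t + 1) = t by omega,
    Nat.choose_self, Nat.choose_eq_zero_of_lt (show t < t + 1 by omega)]
  have hg := cast_g_succ (R := ℤ) t
  push_cast
  linear_combination (4 * (-432 : ℤ) ^ (t + 1)) * hg

theorem recOp_clausenTerm_odd (t : ℕ) :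
    recOp (fun n => clausenTerm n (t + 1)) (2 * t + 1)
      = clausenCert (2 * t + 1) (t + 2) - clausenCert (2 * t + 1) (t + 1) := by
  simp only [recOp]
  rw [clausenTerm_eq_zero (show 2 * t + 1 < 2 * (t + 1) by omega),
    clausenCert_eq_zero (show 2 * t + 1 + 2 < 2 * (t + 2) by omega), clausenTerm, clausenTerm,
    clausenCert, show 2 * t + 1 + 2 - (t + 1) = t + 2 by omega,
    show 2 * t + 1 + 1 - (t + 1) = t + 1 by omega, Nat.choose_self, Nat.choose_succ_self_right]
  have hg := cast_g_succ (R := ℤ) (t + 1)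
  push_cast at hg ⊢
  linear_combination ((4 * (t : ℤ) + 5) * (-432 : ℤ) ^ (t + 1)) * hg

theorem recOp_clausenTerm (n j : ℕ) :
    recOp (fun n => clausenTerm n j) n = clausenCert n (j + 1) - clausenCert n j := by
  obtain h | h | h | h : 2 * j ≤ n ∨ n + 1 = 2 * j ∨ n + 2 = 2 * j ∨ n + 2 < 2 * j := by omega
  · obtain ⟨s, rfl⟩ : ∃ s, n = s + j := ⟨n - j, by omega⟩
    exact recOp_clausenTerm_of_le (by omega)
  · obtain ⟨t, rfl, rfl⟩ : ∃ t, n = 2 * t + 1 ∧ j = t + 1 := ⟨j - 1, by omega, by omega⟩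
    exact recOp_clausenTerm_odd t
  · obtain ⟨t, rfl, rfl⟩ : ∃ t, n = 2 * t ∧ j = t + 1 := ⟨j - 1, by omega, by omega⟩
    exact recOp_clausenTerm_even t
  · simp only [recOp, clausenTerm_eq_zero (show n < 2 * j by omega),
      clausenTerm_eq_zero (show n + 1 < 2 * j by omega),
      clausenTerm_eq_zero (show n + 2 < 2 * j by omega), clausenCert_eq_zero h,
      clausenCert_eq_zero (show n + 2 < 2 * (j + 1) by omega)]
    ring

theorem clausen_recOp (n : ℕ) : recOp clausen n = 0 := by
  have h : recOp clausen n = recOp (fun n' => ∑ j ∈ range (n + 3), clausenTerm n' j) n := by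
    simp only [recOp]
    rw [clausen_eq_sum_range (show n < n + 3 by omega),
      clausen_eq_sum_range (show n + 1 < n + 3 by omega),
      clausen_eq_sum_range (show n + 2 < n + 3 by omega)]
  rw [h, recOp_sum, sum_congr rfl fun j _ => recOp_clausenTerm n j, sum_range_sub,
    clausenCert_eq_zero (by omega), clausenCert_zero, sub_zero]

theorem conv_eq_clausen : conv = clausen :=
  eq_of_recOp_eq_zero conv_recOp clausen_recOp (by decide) (by decide)

theorem clausen_eq_sum_antidiagonal (n : ℕ) :
    clausen n = ∑ q ∈ antidiagonal n, (g q.1 : ℤ) * q.1.choose q.2 * (-432) ^ q.2 := by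
  rw [← Nat.sum_antidiagonal_swap]
  simp only [Prod.fst_swap, Prod.snd_swap]
  rw [Nat.sum_antidiagonal_eq_sum_range_succ (fun j m => (g m : ℤ) * m.choose j * (-432) ^ j)]
  rfl

theorem sum_mul_conv (N : ℕ) (w : ℕ → ℤ) :
    ∑ n ∈ range N, w n * conv n
      = ∑ m ∈ range N, (g m : ℤ) * ∑ j ∈ range (N - m), w (m + j) * m.choose j * (-432) ^ j := by
  simp_rw [conv_eq_clausen, clausen_eq_sum_antidiagonal, mul_sum]
  rw [sum_congr rfl fun n _ => Nat.sum_antidiagonal_subst (f := fun q n => w n * _),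
    sum_range_sum_antidiagonal]
  exact sum_congr rfl fun m _ => sum_congr rfl fun j _ => by ring

theorem prime_dvd_a {p m : ℕ} (hp : p.Prime) (hpm : p ≤ 2 * m) (hmp : m < p) : p ∣ a m := by
  rcases lt_or_ge (3 * m) (2 * p) with h | h
  · refine dvd_mul_of_dvd_left (hp.dvd_choose_of_mod_lt ?_) _
    rw [← Nat.sub_mul_mod (show p * 3 ≤ 6 * m by omega),
      ← Nat.sub_mul_mod (show p * 1 ≤ 3 * m by omega),
      Nat.mod_eq_of_lt (by omega), Nat.mod_eq_of_lt (by omega)]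
    omega
  · refine dvd_mul_of_dvd_right (hp.dvd_choose_of_mod_lt ?_) _
    rw [← Nat.sub_mul_mod (show p * 2 ≤ 3 * m by omega), Nat.mod_eq_of_lt (by omega),
      Nat.mod_eq_of_lt hmp]
    omega

theorem prime_sq_dvd_g {p m : ℕ} (hp : p.Prime) (hpm : p ≤ 2 * m) (hmp : m < p) : p ^ 2 ∣ g m := by
  rw [sq, g, centralBinom_eq_two_mul_choose]
  exact mul_dvd_mul (prime_dvd_a hp hpm hmp) (hp.dvd_choose hmp (by omega) hpm)

end Sextic

theorem stmt_9_general (p : ℕ) (hp : p.Prime) :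
    p ^ 2 ∣ ∑ n ∈ Finset.range p, n * 864 ^ (p - 1 - n) *
      ∑ k ∈ Finset.range (n + 1),
        (Nat.choose (6 * k) (3 * k)) * (Nat.choose (3 * k) k) *
          (Nat.choose (6 * (n - k)) (3 * (n - k))) * (Nat.choose (3 * (n - k)) (n - k)) := by
  rw [← Int.natCast_dvd_natCast]
  push_cast
  simp_rw [← Sextic.conv_eq_sum_choose, Sextic.sum_mul_conv]
  push_cast
  refine dvd_sum fun m hm => ?_
  rcases lt_or_ge (2 * m) p with h | h
  · rw [sum_range_sub_add_mul_pow_mul_choose_mul_pow_eq_zero (by norm_num) h, mul_zero]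
    exact dvd_zero _
  · exact dvd_mul_of_dvd_left (by exact_mod_cast Sextic.prime_sq_dvd_g hp h (mem_range.1 hm)) _

theorem stmt_9 (p : ℕ) (hp : p.Prime) (h3 : 3 < p) :
    p ^ 2 ∣ ∑ n ∈ Finset.range p, n * 864 ^ (p - 1 - n) *
      ∑ k ∈ Finset.range (n + 1),
        (Nat.choose (6 * k) (3 * k)) * (Nat.choose (3 * k) k) *
          (Nat.choose (6 * (n - k)) (3 * (n - k))) * (Nat.choose (3 * (n - k)) (n - k)) :=
  stmt_9_general p hp
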